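/- arXiv:2601.00250 — 2 statements merged into one kernel-verified Lean document; each statement's English description precedes it below -/
import Mathlib

section
/- For any linear [n,k]_q code C with 1 ≤ r < s ≤ k, the generalized Hamming weights satisfy the strict monotonicity d_r(C) < d_s(C); in particular 1 ≤ d_1(C) < d_2(C) < ⋯ < d_k(C) ≤ n. -/
open Module

/-- The support of a subcode `D ≤ F_q^n`. -/
def codeSupp {n : ℕ} {F : Type*} [Field F] (D : Submodule F (Fin n → F)) : Set (Fin n) :=
  {i : Fin n | ∃ c ∈ D, c i ≠ 0}

/-- The `j`-th generalized Hamming weight of the code `C`: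
`d_j(C) = min { |supp(D)| : D ≤ C, dim D = j }`. -/
noncomputable def genHW {n : ℕ} {F : Type*} [Field F]
    (C : Submodule F (Fin n → F)) (j : ℕ) : ℕ :=
  sInf {m | ∃ D : Submodule F (Fin n → F), D ≤ C ∧ finrank F D = j ∧ (codeSupp D).ncard = m}

/-- Every submodule of a finite-dimensional space contains a submodule of any
smaller dimension. -/
lemma exists_le_finrank_eq {F V : Type*} [Field F] [AddCommGroup V] [Module F V]
    (W : Submodule F V) [FiniteDimensional F W] {m : ℕ} (h : m ≤ finrank F W) :
    ∃ W' : Submodule F V, W' ≤ W ∧ finrank F W' = m := by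
  let b := finBasis F W
  let v : Fin m → V := fun j => (b (Fin.castLE h j) : V)
  have hli : LinearIndependent F v := by
    have h1 : LinearIndependent F (fun j : Fin m => b (Fin.castLE h j)) :=
      b.linearIndependent.comp (Fin.castLE h) (Fin.castLE_injective h)
    exact h1.map' W.subtype (Submodule.ker_subtype W)
  refine ⟨Submodule.span F (Set.range v), ?_, ?_⟩
  · rw [Submodule.span_le]
    rintro x ⟨j, rfl⟩
    exact (b (Fin.castLE h j)).2
  · rw [finrank_span_eq_card hli, Fintype.card_fin]

lemma codeSupp_mono {n : ℕ} {F : Type*} [Field F] {D E : Submodule F (Fin n → F)}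
    (h : D ≤ E) : codeSupp D ⊆ codeSupp E := by
  rintro i ⟨c, hc, hci⟩
  exact ⟨c, h hc, hci⟩

/-- The defining set of `genHW C j` is nonempty when `j ≤ finrank C`. -/
lemma genHW_set_nonempty {n : ℕ} {F : Type*} [Field F] (C : Submodule F (Fin n → F))
    {j : ℕ} (h : j ≤ finrank F C) :
    {m | ∃ D : Submodule F (Fin n → F), D ≤ C ∧ finrank F D = j ∧
      (codeSupp D).ncard = m}.Nonempty := by
  obtain ⟨D, hDC, hDr⟩ := exists_le_finrank_eq C h
  exact ⟨(codeSupp D).ncard, D, hDC, hDr, rfl⟩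

lemma genHW_mono {n : ℕ} {F : Type*} [Field F] (C : Submodule F (Fin n → F))
    {r j : ℕ} (hrj : r ≤ j) (hj : j ≤ finrank F C) : genHW C r ≤ genHW C j := by
  obtain ⟨D, hDC, hDr, hDcard⟩ := Nat.sInf_mem (genHW_set_nonempty C hj)
  obtain ⟨D', hD'D, hD'r⟩ := exists_le_finrank_eq D (m := r) (hDr ▸ hrj)
  calc genHW C r ≤ (codeSupp D').ncard :=
        Nat.sInf_le ⟨D', hD'D.trans hDC, hD'r, rfl⟩
    _ ≤ (codeSupp D).ncard :=
        Set.ncard_le_ncard (codeSupp_mono hD'D) (Set.toFinite _)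
    _ = genHW C j := hDcard

/-- Strict monotonicity of the generalized Hamming weights of an `[n,k]_q` code:
for `1 ≤ r < s ≤ k` one has `d_r(C) < d_s(C)`; in particular
`1 ≤ d_1(C) < d_2(C) < ⋯ < d_k(C) ≤ n`. -/
theorem stmt5 {F : Type*} [Field F] [Fintype F] {n k r s : ℕ}
    (C : Submodule F (Fin n → F)) (hdim : finrank F C = k)
    (hr : 1 ≤ r) (hrs : r < s) (hsk : s ≤ k) :
    genHW C r < genHW C s ∧ 1 ≤ genHW C 1 ∧ genHW C k ≤ n := by
  have hsC : s ≤ finrank F C := by rw [hdim]; exact hsk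
  -- the minimizing subcode of dimension `s`
  obtain ⟨D, hDC, hDr, hDcard⟩ := Nat.sInf_mem (genHW_set_nonempty C hsC)
  -- pick a coordinate in the support of `D`
  have hDnt : Nontrivial D := by
    exact Module.nontrivial_of_finrank_pos (R := F) (by omega : 0 < finrank F D)
  obtain ⟨⟨v, hvD⟩, hv0⟩ := exists_ne (0 : D)
  have hvne : v ≠ 0 := by
    intro h; apply hv0; ext; simp [h]
  obtain ⟨i, hvi⟩ : ∃ i, v i ≠ 0 := by
    by_contra h; push_neg at h; exact hvne (funext h)
  have hisupp : i ∈ codeSupp D := ⟨v, hvD, hvi⟩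
  have hDcard' : (codeSupp D).ncard = genHW C s := hDcard
  have hpos : 1 ≤ genHW C s :=
    hDcard' ▸ ((Set.ncard_pos (Set.toFinite _)).2 ⟨i, hisupp⟩)
  -- the evaluation-at-`i` map on `D`
  set f : D →ₗ[F] F := (LinearMap.proj i).comp D.subtype with hf
  have hker : s - 1 ≤ finrank F (LinearMap.ker f) := by
    have h1 := LinearMap.finrank_range_add_finrank_ker f
    have h2 : finrank F (LinearMap.range f) ≤ 1 := by
      simpa using (LinearMap.range f).finrank_le
    rw [hDr] at h1
    omega
  -- push it to a submodule of the ambient space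
  have hmap : s - 1 ≤ finrank F (Submodule.map D.subtype (LinearMap.ker f)) := by
    rwa [Submodule.finrank_map_subtype_eq]
  obtain ⟨D', hD'le, hD'r⟩ := exists_le_finrank_eq _ hmap
  have hD'D : D' ≤ D := by
    refine hD'le.trans ?_
    rintro x ⟨y, _, rfl⟩
    exact y.2
  have hD'supp : codeSupp D' ⊆ codeSupp D \ {i} := by
    rintro j ⟨c, hc, hcj⟩
    refine ⟨⟨c, hD'D hc, hcj⟩, ?_⟩
    obtain ⟨y, hy, rfl⟩ := hD'le hc
    have : (y : Fin n → F) i = 0 := hy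
    simp only [Set.mem_singleton_iff]
    rintro rfl
    exact hcj this
  have hstep : genHW C (s - 1) ≤ genHW C s - 1 := by
    calc genHW C (s - 1) ≤ (codeSupp D').ncard :=
          Nat.sInf_le ⟨D', hD'D.trans hDC, hD'r, rfl⟩
      _ ≤ (codeSupp D \ {i}).ncard :=
          Set.ncard_le_ncard hD'supp (Set.toFinite _)
      _ = (codeSupp D).ncard - 1 := Set.ncard_diff_singleton_of_mem hisupp
      _ = genHW C s - 1 := by rw [hDcard']
  have hmono : genHW C r ≤ genHW C (s - 1) :=
    genHW_mono C (by omega) (by omega)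
  refine ⟨by omega, ?_, ?_⟩
  · -- 1 ≤ genHW C 1
    have h1C : 1 ≤ finrank F C := by omega
    obtain ⟨E, hEC, hEr, hEcard⟩ := Nat.sInf_mem (genHW_set_nonempty C h1C)
    have hEnt : Nontrivial E := by
      exact Module.nontrivial_of_finrank_pos (R := F) (by omega : 0 < finrank F E)
    obtain ⟨⟨w, hwE⟩, hw0⟩ := exists_ne (0 : E)
    have hwne : w ≠ 0 := by
      intro h; apply hw0; ext; simp [h]
    obtain ⟨j, hwj⟩ : ∃ j, w j ≠ 0 := by
      by_contra h; push_neg at h; exact hwne (funext h)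
    have hEcard' : (codeSupp E).ncard = genHW C 1 := hEcard
    exact hEcard' ▸ ((Set.ncard_pos (Set.toFinite _)).2 ⟨j, w, hwE, hwj⟩)
  · -- genHW C k ≤ n
    calc genHW C k ≤ (codeSupp C).ncard := Nat.sInf_le ⟨C, le_rfl, hdim, rfl⟩
      _ ≤ (Set.univ : Set (Fin n)).ncard :=
          Set.ncard_le_ncard (Set.subset_univ _) (Set.toFinite _)
      _ = n := by rw [Set.ncard_univ]; simp
end

section
/- There is no set of 9 or more points in PG(5,2) such that every plane (projective dimension 2, i.e., 3-dimensional linear subspace of F_2^6) contains at most 3 of the points, and there exists such a set of size 8; hence m_2^{(2)}(6,3) = 8. -/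
/-!
Take nonzero representatives `v i` of nine points with at most three on every plane. Four
dependent representatives would span at most a plane, so any four are linearly independent.
Hence the kernel `C` of `c ↦ ∑ c i • v i` is a binary linear code of length 9, dimension at
least `9 - 6 = 3` and minimum weight at least 5. Appending a parity bit raises every nonzero
weight to at least 6, while each of the 10 coordinates is nonzero on at most half of `C`;
double counting gives `12 (|C| - 1) ≤ 10 |C|`, so `|C| ≤ 6 < 8`.

Conversely, no four of the eight listed vectors are dependent (a finite check), so no plane
contains four of the points they span.
-/

open Module Finset

section LinearAlgebra

variable {K V : Type*} [Field K] [AddCommGroup V] [Module K V]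

theorem Submodule.exists_le_finrank_eq [FiniteDimensional K V] {W : Submodule K V} {k : ℕ}
    (hW : finrank K W ≤ k) (hk : k ≤ finrank K V) :
    ∃ S : Submodule K V, W ≤ S ∧ finrank K S = k := by
  obtain ⟨d, rfl⟩ := Nat.exists_eq_add_of_le hW
  induction d generalizing W with
  | zero => exact ⟨W, le_rfl, rfl⟩
  | succ d ih =>
    have hWtop : W ≠ ⊤ := fun hW' => by rw [hW', finrank_top] at hk; omega
    obtain ⟨x, -, hx⟩ := SetLike.exists_of_lt (lt_top_iff_ne_top.2 hWtop)
    have hx' := finrank_sup_span_singleton hx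
    obtain ⟨S, hWS, hS⟩ := ih (W := W ⊔ K ∙ x) (by omega) (by omega)
    exact ⟨S, le_sup_left.trans hWS, by omega⟩

theorem Submodule.exists_eq_span_singleton_of_finrank_eq_one {P : Submodule K V}
    (hP : finrank K P = 1) : ∃ v : V, P = K ∙ v := by
  obtain ⟨v, hvP, hv0⟩ := P.exists_mem_ne_zero_of_ne_bot fun h => by
    rw [h, finrank_bot] at hP; exact zero_ne_one hP
  exact ⟨v, eq_span_singleton_of_mem_of_finrank_eq_one hP hvP hv0⟩

variable {ι : Type*}

theorem injective_span_singleton_of_linearIndepOn_pair {v : ι → V}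
    (hv : ∀ i j, i ≠ j → LinearIndepOn K v {i, j}) :
    Function.Injective fun i => K ∙ v i := by
  intro i j hij
  by_contra hne
  have hj : v j ∈ K ∙ v i := by
    rw [show K ∙ v i = K ∙ v j from hij]; exact Submodule.mem_span_singleton_self (v j)
  obtain ⟨c, hc⟩ := Submodule.mem_span_singleton.1 hj
  have := ((LinearIndepOn.pair_iff v hne).1 (hv i j hne) c (-1) (by rw [hc]; simp)).2
  simp at this

theorem lt_hammingNorm_of_linearCombination_eq_zero {R M : Type*} [Ring R] [DecidableEq R]
    [AddCommGroup M] [Module R M] [Fintype ι] {v : ι → M} {d : ℕ}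
    (hv : ∀ s : Finset ι, #s ≤ d → LinearIndepOn R v s) {c : ι → R}
    (hc : Fintype.linearCombination R v c = 0) (hc0 : c ≠ 0) : d < hammingNorm c := by
  by_contra! hcd
  have hsum : ∑ i ∈ {i | c i ≠ 0}, c i • v i = 0 := by
    rw [sum_filter_of_ne fun i _ h => left_ne_zero_of_smul h, ← hc,
      Fintype.linearCombination_apply]
  have := linearIndepOn_finset_iff.1 (hv _ hcd) c hsum
  exact hc0 <| funext fun i => by_contra fun hi => hi (this i (by simpa using hi))

theorem ncard_span_singleton_le_of_linearIndepOn [FiniteDimensional K V] [Finite ι] {v : ι → V}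
    {k : ℕ} (hv : ∀ s : Finset ι, #s = k + 1 → LinearIndepOn K v s) {S : Submodule K V}
    (hS : finrank K S = k) : {P ∈ Set.range fun i => K ∙ v i | P ≤ S}.ncard ≤ k := by
  have himage :
      {P ∈ Set.range fun i => K ∙ v i | P ≤ S} = (fun i => K ∙ v i) '' {i | v i ∈ S} := by
    ext P
    constructor
    · rintro ⟨⟨i, rfl⟩, hle⟩
      exact ⟨i, (Submodule.span_singleton_le_iff_mem _ _).1 hle, rfl⟩
    · rintro ⟨i, hi, rfl⟩
      exact ⟨⟨i, rfl⟩, (Submodule.span_singleton_le_iff_mem _ _).2 hi⟩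
  rw [himage]
  refine (Set.ncard_image_le (Set.toFinite _)).trans ?_
  by_contra! hk
  have hfin := Set.toFinite {i | v i ∈ S}
  rw [Set.ncard_eq_toFinset_card _ hfin] at hk
  obtain ⟨t, hts, ht⟩ := exists_subset_card_eq hk
  have hind : LinearIndependent K fun x : t => (⟨v x, by simpa using hts x.2⟩ : S) :=
    LinearIndependent.of_comp S.subtype (hv t ht)
  have := hind.fintype_card_le_finrank
  simp [ht, hS] at this

theorem linearIndepOn_of_ncard_le [FiniteDimensional K V] [Fintype ι] {A : Set (Submodule K V)}
    (hA : A.Finite) {k : ℕ} (hkV : k ≤ finrank K V) (hkι : k + 1 ≤ Fintype.card ι)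
    (hAS : ∀ S : Submodule K V, finrank K S = k → {P ∈ A | P ≤ S}.ncard ≤ k)
    {v : ι → V} (hvA : ∀ i, K ∙ v i ∈ A) (hv : Function.Injective fun i => K ∙ v i)
    {s : Finset ι} (hs : #s ≤ k + 1) : LinearIndepOn K v s := by
  obtain ⟨t, hst, ht⟩ := exists_superset_card_eq hs (by simpa using hkι)
  refine LinearIndepOn.mono ?_ (coe_subset.2 hst)
  by_contra hdep
  have hW : finrank K (Submodule.span K (v '' t)) ≤ k := by
    have := mt linearIndependent_iff_card_le_finrank_span.2 hdep
    rw [Set.finrank, ← Set.image_eq_range] at this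
    simp only [Finset.coe_sort_coe, Fintype.card_coe, ht] at this
    omega
  obtain ⟨S, hWS, hS⟩ := Submodule.exists_le_finrank_eq hW hkV
  have hsub : (fun i => K ∙ v i) '' t ⊆ {P ∈ A | P ≤ S} := by
    rintro _ ⟨i, hi, rfl⟩
    exact ⟨hvA i, (Submodule.span_singleton_le_iff_mem _ _).2
      (hWS (Submodule.subset_span (Set.mem_image_of_mem v hi)))⟩
  have := Set.ncard_le_ncard hsub (hA.subset (Set.sep_subset _ _))
  rw [Set.ncard_image_of_injective _ hv, Set.ncard_coe_finset, ht] at this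
  have := hAS S hS
  omega

end LinearAlgebra

theorem ZMod.eq_one_of_ne_zero {a : ZMod 2} (ha : a ≠ 0) : a = 1 :=
  Fin.eq_one_of_ne_zero a ha

theorem AddMonoidHom.two_mul_card_ne_zero_le {G : Type*} [AddGroup G] [Fintype G]
    (f : G →+ ZMod 2) : 2 * #{g | f g ≠ 0} ≤ Fintype.card G := by
  rcases (univ.filter fun g => f g ≠ 0).eq_empty_or_nonempty with h | ⟨g₀, hg₀⟩
  · simp [h]
  have hg₀ : f g₀ ≠ 0 := (mem_filter.1 hg₀).2
  have htrans : #{g | f g ≠ 0} ≤ #{g | ¬f g ≠ 0} := by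
    refine card_le_card_of_injOn (· + g₀) (fun g hg => ?_) (fun a _ b _ h => add_right_cancel h)
    have hg : f g ≠ 0 := (mem_filter.1 hg).2
    simp only [coe_filter, mem_univ, true_and, Set.mem_ofPred_eq, map_add, not_not,
      ZMod.eq_one_of_ne_zero hg, ZMod.eq_one_of_ne_zero hg₀]
    rfl
  have := card_filter_add_card_filter_not (s := univ) fun g => f g ≠ 0
  rw [card_univ] at this
  omega

theorem sum_two_mul_card_ne_zero_le {ι G : Type*} [Fintype ι] [AddGroup G] [Fintype G]
    (f : ι → G →+ ZMod 2) :
    ∑ g, 2 * #{i | f i g ≠ 0} ≤ Fintype.card ι * Fintype.card G :=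
  calc ∑ g, 2 * #{i | f i g ≠ 0} = ∑ i, 2 * #{g | f i g ≠ 0} := by
        simp only [card_filter, mul_sum]
        exact sum_comm
    _ ≤ ∑ _i : ι, Fintype.card G := sum_le_sum fun i _ => (f i).two_mul_card_ne_zero_le
    _ = Fintype.card ι * Fintype.card G := by simp

theorem ZMod.natCast_hammingNorm {ι : Type*} [Fintype ι] (x : ι → ZMod 2) :
    (hammingNorm x : ZMod 2) = ∑ i, x i := by
  rw [hammingNorm, card_filter, Nat.cast_sum]
  refine sum_congr rfl fun i _ => ?_
  split_ifs with h
  · rw [Nat.cast_one, ZMod.eq_one_of_ne_zero h]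
  · rw [Nat.cast_zero, not_not.1 h]

theorem card_sub_one_mul_le_of_le_hammingNorm_add_one {ι : Type*} [Fintype ι]
    (C : Submodule (ZMod 2) (ι → ZMod 2)) {m : ℕ}
    (hC : ∀ c ∈ C, c ≠ 0 → 2 * m ≤ hammingNorm c + 1) :
    (Nat.card C - 1) * (4 * m) ≤ (Fintype.card ι + 1) * Nat.card C := by
  classical
  -- `Option ι` indexes the coordinates of the code extended by a parity bit at `none`.
  let parity : C →+ ZMod 2 :=
    AddMonoidHom.mk' (fun c => ∑ i, (c : ι → ZMod 2) i) fun a b => by simp [sum_add_distrib]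
  let f : Option ι → C →+ ZMod 2 := fun o =>
    o.elim parity fun i => AddMonoidHom.mk' (fun c => (c : ι → ZMod 2) i) fun a b => rfl
  have hext : ∀ c : C, c ≠ 0 → 2 * m ≤ #{o | f o c ≠ 0} := by
    intro c hc0
    have hw := hC c c.2 (by simpa using hc0)
    have hcard : #{o | f o c ≠ 0} =
        (if parity c ≠ 0 then 1 else 0) + hammingNorm (c : ι → ZMod 2) := by
      rw [card_filter, Fintype.sum_option, hammingNorm, card_filter]
      rfl
    rw [hcard]
    split_ifs with hp
    · omega
    · have heven : Even (hammingNorm (c : ι → ZMod 2)) := by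
        rw [← ZMod.natCast_eq_zero_iff_even, ZMod.natCast_hammingNorm]
        exact not_not.1 hp
      obtain ⟨k, hk⟩ := heven
      omega
  have hupper := sum_two_mul_card_ne_zero_le f
  have hlower : (Fintype.card C - 1) * (4 * m) ≤ ∑ c, 2 * #{o | f o c ≠ 0} :=
    calc (Fintype.card C - 1) * (4 * m) = #(univ.erase (0 : C)) • (4 * m) := by
          rw [card_erase_of_mem (mem_univ _), card_univ, smul_eq_mul]
      _ ≤ ∑ c ∈ univ.erase 0, 2 * #{o | f o c ≠ 0} :=
          card_nsmul_le_sum _ _ _ fun c hc => by have := hext c (ne_of_mem_erase hc); omega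
      _ ≤ ∑ c, 2 * #{o | f o c ≠ 0} := sum_le_sum_of_subset (subset_univ _)
  rw [Fintype.card_option] at hupper
  rw [Nat.card_eq_fintype_card]
  exact hlower.trans hupper

theorem linearIndepOn_of_sum_ne_zero {ι M : Type*} [AddCommGroup M] [Module (ZMod 2) M]
    {v : ι → M} {s : Finset ι} (h : ∀ t ⊆ s, t.Nonempty → ∑ i ∈ t, v i ≠ 0) :
    LinearIndepOn (ZMod 2) v s := by
  classical
  refine linearIndepOn_finset_iff.2 fun f hf i hi => by_contra fun hfi => ?_
  refine h {j ∈ s | f j ≠ 0} (filter_subset _ _) ⟨i, mem_filter.2 ⟨hi, hfi⟩⟩ ?_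
  rw [← hf, sum_filter]
  refine sum_congr rfl fun j _ => ?_
  split_ifs with hj
  · rw [ZMod.eq_one_of_ne_zero hj, one_smul]
  · rw [not_not.1 hj, zero_smul]

def eightVectors : Fin 8 → Fin 6 → ZMod 2 :=
  ![![1, 0, 0, 0, 0, 0], ![0, 1, 0, 0, 0, 0], ![0, 0, 1, 0, 0, 0], ![0, 0, 0, 1, 0, 0],
    ![0, 0, 0, 0, 1, 0], ![0, 0, 0, 0, 0, 1], ![1, 1, 1, 1, 0, 0], ![1, 1, 0, 0, 1, 1]]

set_option maxRecDepth 10000 in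
theorem sum_eightVectors_ne_zero :
    ∀ t : Finset (Fin 8), #t ≤ 4 → t.Nonempty → ∑ i ∈ t, eightVectors i ≠ 0 := by
  decide

theorem exists_eight_points_of_plane_ncard_le_three :
    ∃ A : Set (Submodule (ZMod 2) (Fin 6 → ZMod 2)),
      (∀ P ∈ A, finrank (ZMod 2) P = 1) ∧ A.ncard = 8 ∧
      ∀ S : Submodule (ZMod 2) (Fin 6 → ZMod 2), finrank (ZMod 2) S = 3 →
        {P ∈ A | P ≤ S}.ncard ≤ 3 := by
  have hind : ∀ s : Finset (Fin 8), #s ≤ 4 → LinearIndepOn (ZMod 2) eightVectors s :=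
    fun s hs => linearIndepOn_of_sum_ne_zero fun t hts =>
      sum_eightVectors_ne_zero t ((card_le_card hts).trans hs)
  have hinj := injective_span_singleton_of_linearIndepOn_pair fun i j _ => by
    simpa using hind {i, j} (card_le_two.trans (by norm_num))
  refine ⟨Set.range fun i => ZMod 2 ∙ eightVectors i, ?_, ?_, fun S hS => ?_⟩
  · rintro _ ⟨i, rfl⟩
    exact finrank_span_singleton ((hind {i} (by simp)).ne_zero (mem_singleton_self i))
  · rw [Set.ncard_range_of_injective hinj, Nat.card_fin]
  · exact ncard_span_singleton_le_of_linearIndepOn (fun s hs => hind s hs.le) hS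

theorem ncard_le_eight_of_plane_ncard_le_three (A : Set (Submodule (ZMod 2) (Fin 6 → ZMod 2)))
    (hA1 : ∀ P ∈ A, finrank (ZMod 2) P = 1)
    (hA3 : ∀ S : Submodule (ZMod 2) (Fin 6 → ZMod 2), finrank (ZMod 2) S = 3 →
      {P ∈ A | P ≤ S}.ncard ≤ 3) :
    A.ncard ≤ 8 := by
  by_contra! h9
  have hfin : A.Finite := Set.finite_of_ncard_pos (by omega)
  obtain ⟨e⟩ : Nonempty (Fin 9 ↪ A) := by
    have := hfin.fintype
    refine Function.Embedding.nonempty_of_card_le ?_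
    rw [Fintype.card_fin, ← Set.toFinset_card, ← Set.ncard_eq_toFinset_card']
    omega
  choose v hv using fun i => Submodule.exists_eq_span_singleton_of_finrank_eq_one (hA1 _ (e i).2)
  have hvA : ∀ i, ZMod 2 ∙ v i ∈ A := fun i => hv i ▸ (e i).2
  have hvinj : Function.Injective fun i => ZMod 2 ∙ v i := fun i j h =>
    e.injective (Subtype.ext ((hv i).trans (h.trans (hv j).symm)))
  have hind : ∀ s : Finset (Fin 9), #s ≤ 4 → LinearIndepOn (ZMod 2) v s := fun s hs =>
    linearIndepOn_of_ncard_le hfin (by simp) (by simp) hA3 hvA hvinj hs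
  let T := Fintype.linearCombination (ZMod 2) v
  let C := LinearMap.ker T
  have hrank : finrank (ZMod 2) (LinearMap.range T) + finrank (ZMod 2) C = 9 :=
    (T.finrank_range_add_finrank_ker).trans (finrank_fin_fun _)
  have hrange : finrank (ZMod 2) (LinearMap.range T) ≤ 6 :=
    (Submodule.finrank_le _).trans (finrank_fin_fun _).le
  have hC : 2 ^ 3 ≤ Nat.card C := by
    rw [natCard_eq_pow_finrank (K := ZMod 2), Nat.card_zmod]
    exact Nat.pow_le_pow_right (by norm_num) (by omega)
  have hplotkin := card_sub_one_mul_le_of_le_hammingNorm_add_one C (m := 3)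
    fun c hc hc0 => by have := lt_hammingNorm_of_linearCombination_eq_zero hind hc hc0; omega
  rw [Fintype.card_fin] at hplotkin
  omega

/-- `m_2^{(2)}(6,3) = 8`: there is a set of 8 points in `PG(5,2)` such that every plane
(3-dimensional linear subspace of `F_2^6`) contains at most 3 of them, and there is no such
set with 9 or more points. -/
theorem stmt13 :
    (∃ A : Set (Submodule (ZMod 2) (Fin 6 → ZMod 2)),
      (∀ P ∈ A, finrank (ZMod 2) P = 1) ∧ A.ncard = 8 ∧
      ∀ S : Submodule (ZMod 2) (Fin 6 → ZMod 2), finrank (ZMod 2) S = 3 →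
        {P ∈ A | P ≤ S}.ncard ≤ 3) ∧
    (∀ A : Set (Submodule (ZMod 2) (Fin 6 → ZMod 2)),
      (∀ P ∈ A, finrank (ZMod 2) P = 1) →
      (∀ S : Submodule (ZMod 2) (Fin 6 → ZMod 2), finrank (ZMod 2) S = 3 →
        {P ∈ A | P ≤ S}.ncard ≤ 3) →
      A.ncard ≤ 8) :=
  ⟨exists_eight_points_of_plane_ncard_le_three, ncard_le_eight_of_plane_ncard_le_three⟩
end
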